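/- arXiv:1206.4330 — 5 statements merged into one kernel-verified Lean document; each statement's English description precedes it below -/
import Mathlib

section
/- Assume the set-level axioms (A2) and (A3). Then the image of L₁ under I equals L₁, i.e. I '' L₁ = L₁. (This is the set-level content of the Corollary "Ī_rel ∘ L₁ = L̄₁", equivalently I(L₁) = L̄₁, following axiom A.5.) -/
/-- The derived relation `L₃`: `(x,y,z) ∈ L₃ ↔ (x,y,I z) ∈ L`. -/
def L3Rel {G : Type*} (L : Set (G × G × G)) (I : G → G) : Set (G × G × G) :=
  {p | (p.1, p.2.1, I p.2.2) ∈ L}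

/-- The derived set of "units" `L₁ = {z | ∃ a, (a, I a, z) ∈ L₃}`. -/
def L1Set {G : Type*} (L : Set (G × G × G)) (I : G → G) : Set G :=
  {z | ∃ a, (a, I a, z) ∈ L3Rel L I}

/-- The derived relation `L₂ = L₃ ∘ (L₁ × Id)`: `(x,z) ∈ L₂ ↔ ∃ l ∈ L₁, (l,x,z) ∈ L₃`. -/
def L2Rel {G : Type*} (L : Set (G × G × G)) (I : G → G) : Set (G × G) :=
  {p | ∃ l ∈ L1Set L I, (l, p.1, p.2) ∈ L3Rel L I}

/-- Assuming (A2) and (A3), the image of `L₁` under `I` equals `L₁`. -/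
theorem I_image_L1_eq_L1 {G : Type*} (L : Set (G × G × G)) (I : G → G)
    (A2 : I ∘ I = id)
    (A3 : ∀ x y z : G, (x, y, z) ∈ L ↔ (I y, I x, I z) ∈ L) :
    I '' L1Set L I = L1Set L I := by
  have II : ∀ g : G, I (I g) = g := fun g => congrFun A2 g
  have key : ∀ z, z ∈ L1Set L I → I z ∈ L1Set L I := by
    rintro z ⟨a, ha⟩
    refine ⟨a, ?_⟩
    simp only [L3Rel, Set.mem_setOf_eq] at ha ⊢
    rw [II]
    have := (A3 a (I a) (I z)).mp ha
    simp only [II] at this; exact this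
  ext z
  constructor
  · rintro ⟨w, hw, rfl⟩; exact key w hw
  · intro hz; exact ⟨I z, key z hz, II z⟩
end

section
/- Assume the set-level axioms (A1), (A2), (A3), (A4) and (A6). Then multiplying by units on either side gives the same relation L₂: for all x, z ∈ 𝒢, (∃ l ∈ L₁, (l, x, z) ∈ L₃) if and only if (∃ l ∈ L₁, (x, l, z) ∈ L₃). (This is the set-level content of the Corollary "L₂ = L₃ ∘ (Id × L₁)" following axiom A.7, where L₂ was defined as L₃ ∘ (L₁ × Id).) -/
/-- Assuming (A1)-(A4) and (A6), multiplying by units on either side gives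
the same relation `L₂`: `(∃ l ∈ L₁, (l,x,z) ∈ L₃) ↔ (∃ l ∈ L₁, (x,l,z) ∈ L₃)`. -/
theorem L2_eq_L3_comp_Id_times_L1 {G : Type*} (L : Set (G × G × G)) (I : G → G)
    (A1 : ∀ x y z : G, (x, y, z) ∈ L → (y, z, x) ∈ L)
    (A2 : I ∘ I = id)
    (A3 : ∀ x y z : G, (x, y, z) ∈ L ↔ (I y, I x, I z) ∈ L)
    (A4 : ∀ x y w z : G,
      (∃ u, (x, y, u) ∈ L3Rel L I ∧ (u, w, z) ∈ L3Rel L I) ↔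
      (∃ v, (y, w, v) ∈ L3Rel L I ∧ (x, v, z) ∈ L3Rel L I))
    (A6 : ∀ z : G, z ∈ L1Set L I ↔
      ∃ l₁ ∈ L1Set L I, ∃ l₂ ∈ L1Set L I, (l₁, l₂, z) ∈ L3Rel L I) :
    ∀ x z : G,
      (∃ l ∈ L1Set L I, (l, x, z) ∈ L3Rel L I) ↔
      (∃ l ∈ L1Set L I, (x, l, z) ∈ L3Rel L I) := by
  have II : ∀ t : G, I (I t) = t := fun t => congrFun A2 t
  have invL3 : ∀ x y z : G, (x, y, z) ∈ L3Rel L I → (I y, I x, I z) ∈ L3Rel L I := by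
    intro x y z h
    have h' := (A3 x y (I z)).mp h
    simpa [L3Rel, II] using h'
  have cycL3 : ∀ x y z : G, (x, y, z) ∈ L3Rel L I → (y, I z, I x) ∈ L3Rel L I := by
    intro x y z h
    have h' := A1 x y (I z) h
    simpa [L3Rel, II] using h'
  have L1inv : ∀ l : G, l ∈ L1Set L I → I l ∈ L1Set L I := by
    intro l hl
    obtain ⟨a, ha⟩ := hl
    have h := invL3 a (I a) l ha
    rw [II] at h
    exact ⟨a, h⟩
  have fwd : ∀ x z : G, (∃ l ∈ L1Set L I, (l, x, z) ∈ L3Rel L I) →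
      ∃ l ∈ L1Set L I, (x, l, z) ∈ L3Rel L I := by
    intro x z ⟨l, ⟨a, ha⟩, hl⟩
    obtain ⟨v, hv1, hv2⟩ := (A4 a (I a) x z).mp ⟨l, ha, hl⟩
    have hx : (x, I v, a) ∈ L3Rel L I := by
      have h := cycL3 (I a) x v hv1
      rwa [II] at h
    obtain ⟨w, hw1, hw2⟩ := (A4 x (I v) v z).mp ⟨a, hx, hv2⟩
    refine ⟨w, ⟨I v, ?_⟩, hw2⟩
    rwa [II]
  intro x z
  constructor
  · exact fwd x z
  · intro ⟨l, hl1, h⟩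
    have h1 : (I l, I x, I z) ∈ L3Rel L I := invL3 x l z h
    obtain ⟨l', hl', h'⟩ := fwd (I x) (I z) ⟨I l, L1inv l hl1, h1⟩
    have h2 := invL3 (I x) l' (I z) h'
    rw [II, II] at h2
    exact ⟨I l', L1inv l' hl', h2⟩
end

section
/- Assume the set-level axioms (A1), (A2), (A3), (A4) and (A6). Then L₂ is idempotent under relation composition: for all x, z ∈ 𝒢, (∃ y ∈ 𝒢, (x,y) ∈ L₂ ∧ (y,z) ∈ L₂) if and only if (x,z) ∈ L₂, i.e. L₂ ∘ L₂ = L₂. -/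
/-- Assuming (A1)-(A4) and (A6), `L₂` is idempotent: `L₂ ∘ L₂ = L₂`. -/
theorem L2_comp_L2_eq_L2 {G : Type*} (L : Set (G × G × G)) (I : G → G)
    (A1 : ∀ x y z : G, (x, y, z) ∈ L → (y, z, x) ∈ L)
    (A2 : I ∘ I = id)
    (A3 : ∀ x y z : G, (x, y, z) ∈ L ↔ (I y, I x, I z) ∈ L)
    (A4 : ∀ x y w z : G,
      (∃ u, (x, y, u) ∈ L3Rel L I ∧ (u, w, z) ∈ L3Rel L I) ↔
      (∃ v, (y, w, v) ∈ L3Rel L I ∧ (x, v, z) ∈ L3Rel L I))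
    (A6 : ∀ z : G, z ∈ L1Set L I ↔
      ∃ l₁ ∈ L1Set L I, ∃ l₂ ∈ L1Set L I, (l₁, l₂, z) ∈ L3Rel L I) :
    ∀ x z : G,
      (∃ y : G, (x, y) ∈ L2Rel L I ∧ (y, z) ∈ L2Rel L I) ↔ (x, z) ∈ L2Rel L I := by
  intro x z
  constructor
  · rintro ⟨y, ⟨l, hl, hlxy⟩, ⟨m, hm, hmyz⟩⟩
    obtain ⟨u, hmlu, huxz⟩ := (A4 m l x z).mpr ⟨y, hlxy, hmyz⟩
    exact ⟨u, (A6 u).mpr ⟨m, hm, l, hl, hmlu⟩, huxz⟩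
  · rintro ⟨l, hl, hlxz⟩
    obtain ⟨l₁, hl₁, l₂, hl₂, h12⟩ := (A6 l).mp hl
    obtain ⟨v, h2xv, h1vz⟩ := (A4 l₁ l₂ x z).mp ⟨l, h12, hlxz⟩
    exact ⟨v, ⟨l₂, hl₂, h2xv⟩, ⟨l₁, hl₁, h1vz⟩⟩
end

section
/- Assume the set-level axioms (A1), (A2), (A3), (A4) and (A6). Then: (a) L₂ commutes with I, i.e. for all x, y ∈ 𝒢, (x,y) ∈ L₂ if and only if (I(x), I(y)) ∈ L₂; and (b) L₂ equals its own transpose, i.e. for all x, y ∈ 𝒢, (x,y) ∈ L₂ if and only if (y,x) ∈ L₂. (This is the set-level content of the Corollary "Ī_rel ∘ L₂ = L̄₂ ∘ Ī_rel and L₂* = L₂".) -/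
/-- Assuming (A1)-(A4) and (A6): (a) `L₂` commutes with `I`, and
(b) `L₂` equals its own transpose. -/
theorem L2_I_equivariant_and_symmetric {G : Type*} (L : Set (G × G × G)) (I : G → G)
    (A1 : ∀ x y z : G, (x, y, z) ∈ L → (y, z, x) ∈ L)
    (A2 : I ∘ I = id)
    (A3 : ∀ x y z : G, (x, y, z) ∈ L ↔ (I y, I x, I z) ∈ L)
    (A4 : ∀ x y w z : G,
      (∃ u, (x, y, u) ∈ L3Rel L I ∧ (u, w, z) ∈ L3Rel L I) ↔
      (∃ v, (y, w, v) ∈ L3Rel L I ∧ (x, v, z) ∈ L3Rel L I))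
    (A6 : ∀ z : G, z ∈ L1Set L I ↔
      ∃ l₁ ∈ L1Set L I, ∃ l₂ ∈ L1Set L I, (l₁, l₂, z) ∈ L3Rel L I) :
    (∀ x y : G, (x, y) ∈ L2Rel L I ↔ (I x, I y) ∈ L2Rel L I) ∧
    (∀ x y : G, (x, y) ∈ L2Rel L I ↔ (y, x) ∈ L2Rel L I) := by
  have hII : ∀ g : G, I (I g) = g := fun g => congrFun A2 g
  have cyc : ∀ p q r : G, (p, q, r) ∈ L3Rel L I → (q, I r, I p) ∈ L3Rel L I := by
    intro p q r h
    simp only [L3Rel, Set.mem_setOf_eq] at h ⊢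
    rw [hII]
    exact A1 _ _ _ h
  have a3' : ∀ p q r : G, (p, q, r) ∈ L3Rel L I → (I q, I p, I r) ∈ L3Rel L I := by
    intro p q r h
    exact (A3 p q (I r)).mp h
  have hInv : ∀ l, l ∈ L1Set L I → I l ∈ L1Set L I := by
    rintro l ⟨a, ha⟩
    refine ⟨a, ?_⟩
    have h := a3' a (I a) l ha
    rwa [hII] at h
  have key : ∀ x z : G, (∃ l ∈ L1Set L I, (l, x, z) ∈ L3Rel L I) →
      ∃ m ∈ L1Set L I, (m, I x, I z) ∈ L3Rel L I := by
    rintro x z ⟨l, ⟨a, ha⟩, hlxz⟩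
    obtain ⟨v, hv1, hv2⟩ := (A4 a (I a) x z).mp ⟨l, ha, hlxz⟩
    have h4 : (v, I z, I a) ∈ L3Rel L I := cyc a v z hv2
    obtain ⟨m, hm1, hm2⟩ := (A4 v (I z) x v).mp ⟨I a, h4, hv1⟩
    -- hm1 : (I z, x, m) ∈ L₃, hm2 : (v, m, v) ∈ L₃
    have hm6 : (I v, v, I m) ∈ L3Rel L I := by
      have h := cyc m (I v) (I v) (cyc v m v hm2)
      rwa [hII] at h
    have hmL1 : m ∈ L1Set L I := by
      have h1 : I m ∈ L1Set L I := ⟨I v, by rw [hII]; exact hm6⟩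
      have h2 := hInv _ h1
      rwa [hII] at h2
    have h7 : (m, I x, I z) ∈ L3Rel L I := by
      have h := a3' (I z) x m hm1
      rw [hII] at h
      have h' := cyc (I x) z (I m) h
      rw [hII, hII] at h'
      exact cyc z m x h'
    exact ⟨m, hmL1, h7⟩
  have hsym : ∀ a b : G, (a, b) ∈ L2Rel L I → (b, a) ∈ L2Rel L I := by
    rintro a b ⟨l, hl, hlab⟩
    have h1 := a3' l a b hlab
    have h2 := cyc (I a) (I l) (I b) h1
    rw [hII, hII] at h2
    exact ⟨I l, hInv l hl, h2⟩
  constructor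
  · intro x y
    constructor
    · exact fun h => key x y h
    · intro h
      have h2 := key (I x) (I y) h
      rwa [hII, hII] at h2
  · exact fun x y => ⟨hsym x y, hsym y x⟩
end

section
/- Assume the set-level axioms (A1), (A2), (A3), (A4) and (A6), and define C := { z ∈ 𝒢 : ∃ x ∈ 𝒢, (x,z) ∈ L₂ } (the range of L₂). Then: (a) C equals the domain of L₂, i.e. C = { x ∈ 𝒢 : ∃ z ∈ 𝒢, (x,z) ∈ L₂ } (set-level content of "C* = 𝒢* ∘ L₂"); and (b) the restriction of L₂ to C is an equivalence relation on C: it is reflexive on C (for every c ∈ C, (c,c) ∈ L₂), symmetric, and transitive. (This is the content of the Corollary following axiom A.8.) -/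
/-- Assuming (A1)-(A4) and (A6), with `C` the range of `L₂`:
(a) `C` equals the domain of `L₂`; (b) `L₂` restricted to `C` is an equivalence relation:
reflexive on `C`, symmetric, and transitive. -/
theorem C_eq_domain_and_L2_equivalence_on_C {G : Type*} (L : Set (G × G × G)) (I : G → G)
    (A1 : ∀ x y z : G, (x, y, z) ∈ L → (y, z, x) ∈ L)
    (A2 : I ∘ I = id)
    (A3 : ∀ x y z : G, (x, y, z) ∈ L ↔ (I y, I x, I z) ∈ L)
    (A4 : ∀ x y w z : G,
      (∃ u, (x, y, u) ∈ L3Rel L I ∧ (u, w, z) ∈ L3Rel L I) ↔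
      (∃ v, (y, w, v) ∈ L3Rel L I ∧ (x, v, z) ∈ L3Rel L I))
    (A6 : ∀ z : G, z ∈ L1Set L I ↔
      ∃ l₁ ∈ L1Set L I, ∃ l₂ ∈ L1Set L I, (l₁, l₂, z) ∈ L3Rel L I)
    (C : Set G) (hC : C = {z : G | ∃ x : G, (x, z) ∈ L2Rel L I}) :
    C = {x : G | ∃ z : G, (x, z) ∈ L2Rel L I} ∧
    (∀ c ∈ C, (c, c) ∈ L2Rel L I) ∧
    (∀ x y : G, (x, y) ∈ L2Rel L I → (y, x) ∈ L2Rel L I) ∧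
    (∀ x y z : G, (x, y) ∈ L2Rel L I → (y, z) ∈ L2Rel L I → (x, z) ∈ L2Rel L I) := by

  have hII : ∀ a : G, I (I a) = a := fun a => congrFun A2 a
  have h3 : ∀ x y z : G, (x, y, z) ∈ L3Rel L I → (I y, I x, I z) ∈ L3Rel L I := by
    intro x y z h
    simp only [L3Rel, Set.mem_setOf_eq] at *
    exact (A3 x y (I z)).mp h
  have h1I : ∀ z, z ∈ L1Set L I → I z ∈ L1Set L I := by
    rintro z ⟨a, ha⟩
    refine ⟨a, ?_⟩
    have := h3 a (I a) z ha
    rwa [hII] at this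
  have hsymm : ∀ x y : G, (x, y) ∈ L2Rel L I → (y, x) ∈ L2Rel L I := by
    rintro x y ⟨l, hl, hxy⟩
    refine ⟨I l, h1I l hl, ?_⟩
    simp only [L3Rel, L2Rel, Set.mem_setOf_eq] at *
    have h1 : (I y, l, x) ∈ L := A1 _ _ _ (A1 _ _ _ hxy)
    have h2 := (A3 (I y) l x).mp h1
    rwa [hII] at h2
  have htrans : ∀ x y z : G, (x, y) ∈ L2Rel L I → (y, z) ∈ L2Rel L I →
      (x, z) ∈ L2Rel L I := by
    rintro x y z ⟨l1, hl1, h1⟩ ⟨l2, hl2, h2⟩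
    obtain ⟨u, hu1, hu2⟩ := (A4 l2 l1 x z).mpr ⟨y, h1, h2⟩
    exact ⟨u, (A6 u).mpr ⟨l2, hl2, l1, hl1, hu1⟩, hu2⟩
  refine ⟨?_, ?_, hsymm, htrans⟩
  · ext c
    simp only [hC, Set.mem_setOf_eq]
    exact ⟨fun ⟨x, hx⟩ => ⟨x, hsymm _ _ hx⟩, fun ⟨x, hx⟩ => ⟨x, hsymm _ _ hx⟩⟩
  · intro c hc
    rw [hC] at hc
    obtain ⟨x, hx⟩ := hc
    exact htrans _ _ _ (hsymm _ _ hx) hx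
end
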